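/- Let G be any group, f : G → Aut(G) a homomorphism, g : G → G a bijection with g(1) = 1 satisfying g(στ) = g(σ)·f(σ)(g(τ)) for all σ, τ ∈ G, and define h : G → Aut(G) by h(σ) = conj(g(σ))∘f(σ). Assume N = {ρ(g(σ))∘f(σ) : σ ∈ G} is a normal subgroup of Hol(G). Then for any φ ∈ Aut(G) and σ ∈ G, letting σ_φ ∈ G be the unique element with φ(g(σ)) = g(σ_φ), one has φ∘f(σ)∘φ⁻¹ = f(σ_φ) and φ∘h(σ)∘φ⁻¹ = h(σ_φ). -/

import Mathlib

/-- The left regular representation `λ : G →* Perm G`, `λ(σ)(x) = σ·x`. -/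
def lambda (G : Type*) [Group G] : G →* Equiv.Perm G where
  toFun σ := Equiv.mulLeft σ
  map_one' := by ext x; simp
  map_mul' σ τ := by ext x; simp [mul_assoc]

/-- The right regular representation `ρ : G →* Perm G`, `ρ(σ)(x) = x·σ⁻¹`. -/
def rho (G : Type*) [Group G] : G →* Equiv.Perm G where
  toFun σ := Equiv.mulRight σ⁻¹
  map_one' := by ext x; simp
  map_mul' σ τ := by ext x; simp [mul_assoc]

/-- The holomorph `Hol(G)`: the normalizer of `λ(G)` in `Perm G`. -/
def Hol (G : Type*) [Group G] : Subgroup (Equiv.Perm G) :=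
  Subgroup.normalizer ((lambda G).range : Set (Equiv.Perm G))

/-!
Conjugating `ρ(g(σ))∘f(σ)` by an automorphism `φ` gives `ρ(φ(g(σ)))∘(φ∘f(σ)∘φ⁻¹)`. As `φ` lies
in `Hol(G)` and `N` is normal there, this is again of the form `ρ(g(τ))∘f(τ)`; since a product
`ρ(a)∘ψ` determines `a` (evaluate at `1`) and then `ψ`, we get `g(τ) = φ(g(σ)) = g(σ_φ)`, so
`τ = σ_φ`, and `φ∘f(σ)∘φ⁻¹ = f(σ_φ)`. The claim for `h` follows from
`φ∘conj(a)∘φ⁻¹ = conj(φ(a))`.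
-/

section Holomorph

variable {G : Type*} [Group G]

@[simp]
theorem MulAut.coe_toPerm (φ : MulAut G) : ⇑(MulAut.toPerm G φ) = φ := rfl

@[simp]
theorem MulAut.coe_toPerm_symm (φ : MulAut G) : ⇑(MulAut.toPerm G φ).symm = φ.symm := rfl

theorem MulAut.toPerm_mul_lambda_mul_inv (φ : MulAut G) (a : G) :
    MulAut.toPerm G φ * lambda G a * (MulAut.toPerm G φ)⁻¹ = lambda G (φ a) := by
  ext x
  simp [lambda]

theorem MulAut.toPerm_mul_rho_mul_inv (φ : MulAut G) (a : G) :
    MulAut.toPerm G φ * rho G a * (MulAut.toPerm G φ)⁻¹ = rho G (φ a) := by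
  ext x
  simp [rho]

theorem MulAut.mul_conj_mul_inv (φ : MulAut G) (a : G) :
    φ * MulAut.conj a * φ⁻¹ = MulAut.conj (φ a) := by
  ext x
  simp

theorem MulAut.toPerm_mem_Hol (φ : MulAut G) : MulAut.toPerm G φ ∈ Hol G := by
  refine Subgroup.mem_normalizer_iff.mpr fun q => ⟨?_, ?_⟩
  · rintro ⟨a, rfl⟩
    exact ⟨φ a, (MulAut.toPerm_mul_lambda_mul_inv φ a).symm⟩
  · rintro ⟨a, ha⟩
    refine ⟨φ⁻¹ a, ?_⟩
    rw [← MulAut.toPerm_mul_lambda_mul_inv, ha, map_inv]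
    group

theorem eq_and_eq_of_rho_mul_toPerm_eq {a b : G} {ψ χ : MulAut G}
    (h : rho G a * MulAut.toPerm G ψ = rho G b * MulAut.toPerm G χ) : a = b ∧ ψ = χ := by
  have hab : a = b := by
    simpa [rho] using congrArg (· 1) h
  subst hab
  exact ⟨rfl, MulEquiv.toEquiv_injective (mul_left_cancel h)⟩

end Holomorph

theorem conj_f_and_h_by_aut_general
    (G : Type*) [Group G]
    (f h : G →* MulAut G) (g : Equiv.Perm G)
    (hh : ∀ σ : G, h σ = MulAut.conj (g σ) * f σ)
    (N : Subgroup (Equiv.Perm G))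
    (hN : (N : Set (Equiv.Perm G))
      = {q | ∃ σ : G, q = rho G (g σ) * MulAut.toPerm G (f σ)})
    (hNnorm : ∀ x ∈ Hol G, ∀ n ∈ N, x * n * x⁻¹ ∈ N) :
    ∀ (φ : MulAut G) (σ σφ : G), φ (g σ) = g σφ →
      φ * f σ * φ⁻¹ = f σφ ∧ φ * h σ * φ⁻¹ = h σφ := by
  intro φ σ σφ hσφ
  have hσN : rho G (g σ) * MulAut.toPerm G (f σ) ∈ N := by
    rw [← SetLike.mem_coe, hN]
    exact ⟨σ, rfl⟩
  have hconj : rho G (φ (g σ)) * MulAut.toPerm G (φ * f σ * φ⁻¹) ∈ N := by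
    rw [map_mul, map_mul, ← MulAut.toPerm_mul_rho_mul_inv, map_inv]
    convert hNnorm _ (MulAut.toPerm_mem_Hol φ) _ hσN using 1
    group
  rw [← SetLike.mem_coe, hN] at hconj
  obtain ⟨τ, hτ⟩ := hconj
  obtain ⟨hgτ, hfτ⟩ := eq_and_eq_of_rho_mul_toPerm_eq hτ
  obtain rfl : τ = σφ := g.injective (hgτ.symm.trans hσφ)
  refine ⟨hfτ, ?_⟩
  rw [hh, hh, ← hfτ, ← hσφ, ← MulAut.mul_conj_mul_inv]
  group

/-- Let `G` be any group, `f : G →* Aut(G)`, `g` a bijection of `G`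
with `g(1) = 1` and `g(στ) = g(σ)·f(σ)(g(τ))`, `h(σ) = conj(g(σ))∘f(σ)`, and assume
`N = {ρ(g(σ))∘f(σ) : σ ∈ G}` is a normal subgroup of `Hol(G)`. Then for any
`φ ∈ Aut(G)` and `σ ∈ G`, letting `σ_φ` be the (unique) element with
`φ(g(σ)) = g(σ_φ)`, one has `φ∘f(σ)∘φ⁻¹ = f(σ_φ)` and `φ∘h(σ)∘φ⁻¹ = h(σ_φ)`. -/
theorem conj_f_and_h_by_aut
    (G : Type*) [Group G]
    (f h : G →* MulAut G) (g : Equiv.Perm G) (hg1 : g 1 = 1)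
    (hrel : ∀ σ τ : G, g (σ * τ) = g σ * (f σ) (g τ))
    (hh : ∀ σ : G, h σ = MulAut.conj (g σ) * f σ)
    (N : Subgroup (Equiv.Perm G))
    (hN : (N : Set (Equiv.Perm G))
      = {q | ∃ σ : G, q = rho G (g σ) * MulAut.toPerm G (f σ)})
    (hNle : N ≤ Hol G)
    (hNnorm : ∀ x ∈ Hol G, ∀ n ∈ N, x * n * x⁻¹ ∈ N) :
    ∀ (φ : MulAut G) (σ σφ : G), φ (g σ) = g σφ →
      φ * f σ * φ⁻¹ = f σφ ∧ φ * h σ * φ⁻¹ = h σφ :=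
  conj_f_and_h_by_aut_general G f h g hh N hN hNnorm
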